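/- Let n ≥ 2 and let M be an n×d real matrix with d < n, all of whose entries have absolute value at most 1/n, and whose minimum singular value is at least α > 0. Let g = (1/n²)·z where z ∈ ℝⁿ is a random vector with independent standard Gaussian N(0,1) entries, and let [M, g] be the n×(d+1) matrix formed by appending g as a new column to M. Then with probability at least 1 − n^{−2}: every entry of [M, g] has absolute value at most 1/n, and the minimum singular value of [M, g] is at least n^{−10}·α. -/

import Mathlib

open MeasureTheory ProbabilityTheory Matrix

/-- Euclidean norm of a vector. -/
noncomputable def vnorm {ι : Type*} [Fintype ι] (v : ι → ℝ) : ℝ :=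
  Real.sqrt (∑ i, v i ^ 2)

/-- Minimum singular value: the minimum of `‖Mx‖₂` over unit vectors `x`. -/
noncomputable def sigmaMin {ι κ' : Type*} [Fintype ι] [Fintype κ']
    (M : Matrix ι κ' ℝ) : ℝ :=
  ⨅ x : {x : κ' → ℝ // vnorm x = 1}, vnorm (M.mulVec x)

/-- `[M, g]`: the matrix `M` with the column `g` appended as its last column. -/
def appendCol {n d : ℕ} (M : Matrix (Fin n) (Fin d) ℝ) (g : Fin n → ℝ) :
    Matrix (Fin n) (Fin (d + 1)) ℝ :=
  Matrix.of fun i j => Fin.lastCases (g i) (fun j' => M i j') j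

/-! Let `v` be a unit vector orthogonal to the columns of `M`; it exists because `d < n`.
Split a unit vector as `x = (y, t)`, so that `[M, g] x = M y + t g`. If `|t| ≥ α / 2`, then
`‖[M, g] x‖ ≥ |⟪v, [M, g] x⟫| = |t| |⟪v, g⟫|`; otherwise `‖y‖ ≥ 3/4` (as `α ≤ 1` by the entry
bound) and `‖M y‖ ≥ α ‖y‖` dominates `‖t g‖ ≤ α / 2`. Hence `σ_min [M, g] ≥ n⁻¹⁰ α` as soon as
`|g i| ≤ 1 / n` for all `i` and `|⟪v, g⟫| ≥ n⁻⁶`.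
For `g = z / n²` this fails only if some `|z i| > n`, or if `|⟪v, z⟫| < n⁻⁴`. Since `⟪v, z⟫` is a
standard Gaussian, the Mills-ratio tail bound `P(|Z| > t) ≤ 2 e^{-t²/2} / (t √(2π))` and the
density bound `P(|Z| < δ) ≤ 2 δ / √(2π)` bound these probabilities by `(4/5) n⁻²` and `(1/5) n⁻²`.
-/

open Real Set

section vnorm

variable {ι : Type*} [Fintype ι]

lemma vnorm_eq_norm_toLp (v : ι → ℝ) : vnorm v = ‖(WithLp.toLp 2 v : EuclideanSpace ℝ ι)‖ := by
  simp [vnorm, EuclideanSpace.norm_eq]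

lemma vnorm_nonneg (v : ι → ℝ) : 0 ≤ vnorm v := Real.sqrt_nonneg _

lemma vnorm_smul (c : ℝ) (v : ι → ℝ) : vnorm (c • v) = |c| * vnorm v := by
  simp only [vnorm_eq_norm_toLp, WithLp.toLp_smul, norm_smul, Real.norm_eq_abs]

lemma vnorm_sub_le_vnorm_add (v w : ι → ℝ) : vnorm v - vnorm w ≤ vnorm (v + w) := by
  simpa only [vnorm_eq_norm_toLp, WithLp.toLp_add] using
    norm_sub_le_norm_add (E := EuclideanSpace ℝ ι) _ _

lemma abs_dotProduct_le_vnorm_mul (v w : ι → ℝ) : |v ⬝ᵥ w| ≤ vnorm v * vnorm w := by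
  have := abs_real_inner_le_norm (WithLp.toLp 2 v : EuclideanSpace ℝ ι) (WithLp.toLp 2 w)
  simpa [vnorm_eq_norm_toLp, EuclideanSpace.inner_eq_star_dotProduct, dotProduct_comm] using this

lemma vnorm_le_sqrt_card_mul {c : ℝ} {w : ι → ℝ} (h : ∀ i, |w i| ≤ c) :
    vnorm w ≤ √(Fintype.card ι) * c := by
  rcases isEmpty_or_nonempty ι with hι | ⟨⟨i⟩⟩
  · simp [vnorm]
  have hc : 0 ≤ c := (abs_nonneg _).trans (h i)
  rw [vnorm, ← Real.sqrt_sq hc, ← Real.sqrt_mul (Nat.cast_nonneg _)]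
  refine Real.sqrt_le_sqrt ?_
  calc ∑ i, w i ^ 2 ≤ ∑ _i : ι, c ^ 2 :=
        Finset.sum_le_sum fun i _ => sq_le_sq' (abs_le.mp (h i)).1 (abs_le.mp (h i)).2
    _ = Fintype.card ι * c ^ 2 := by simp

lemma vnorm_single [DecidableEq ι] (j : ι) (a : ℝ) : vnorm (Pi.single j a) = |a| := by
  rw [vnorm, Finset.sum_eq_single j (fun i _ hi => by simp [hi]) (by simp)]
  simp [Real.sqrt_sq_eq_abs]

lemma exists_vnorm_eq_one_smul {v : ι → ℝ} (hv : v ≠ 0) : ∃ c : ℝ, vnorm (c • v) = 1 := by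
  refine ⟨‖WithLp.toLp 2 v‖⁻¹, ?_⟩
  rw [vnorm_eq_norm_toLp, WithLp.toLp_smul]
  exact norm_smul_inv_norm (by simpa using hv)

end vnorm

lemma sqrt_natCast_mul_inv_le_one {n : ℕ} (hn : 1 ≤ n) : √(n : ℝ) * (1 / n) ≤ 1 := by
  have hn1 : (1 : ℝ) ≤ n := by exact_mod_cast hn
  rw [mul_one_div, div_le_one (by positivity)]
  exact Real.sqrt_le_iff.mpr ⟨by positivity, by nlinarith⟩

section sigmaMin

variable {ι κ : Type*} [Fintype ι] [Fintype κ]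

lemma sigmaMin_le_vnorm_mulVec (M : Matrix ι κ ℝ) {x : κ → ℝ} (hx : vnorm x = 1) :
    sigmaMin M ≤ vnorm (M *ᵥ x) :=
  ciInf_le ⟨0, by rintro _ ⟨y, rfl⟩; exact vnorm_nonneg _⟩
    (⟨x, hx⟩ : {x : κ → ℝ // vnorm x = 1})

lemma sigmaMin_mul_vnorm_le (M : Matrix ι κ ℝ) (y : κ → ℝ) :
    sigmaMin M * vnorm y ≤ vnorm (M *ᵥ y) := by
  rcases eq_or_ne y 0 with rfl | hy
  · simp [vnorm]
  obtain ⟨c, hc⟩ := exists_vnorm_eq_one_smul hy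
  have key := sigmaMin_le_vnorm_mulVec M hc
  rw [vnorm_smul] at hc
  rw [Matrix.mulVec_smul, vnorm_smul] at key
  calc sigmaMin M * vnorm y ≤ |c| * vnorm (M *ᵥ y) * vnorm y :=
        mul_le_mul_of_nonneg_right key (vnorm_nonneg y)
    _ = vnorm (M *ᵥ y) := by linear_combination vnorm (M *ᵥ y) * hc

lemma le_sigmaMin [Nonempty κ] {M : Matrix ι κ ℝ} {c : ℝ}
    (h : ∀ x, vnorm x = 1 → c ≤ vnorm (M *ᵥ x)) : c ≤ sigmaMin M := by
  obtain ⟨j⟩ := ‹Nonempty κ›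
  classical
  have : Nonempty {x : κ → ℝ // vnorm x = 1} := ⟨⟨Pi.single j 1, by simp [vnorm_single]⟩⟩
  exact le_ciInf fun x => h x.1 x.2

lemma sigmaMin_le_sqrt_card_mul {M : Matrix ι κ ℝ} {c : ℝ} (hc : 0 ≤ c)
    (h : ∀ i j, |M i j| ≤ c) : sigmaMin M ≤ √(Fintype.card ι) * c := by
  rcases isEmpty_or_nonempty κ with hκ | ⟨⟨j⟩⟩
  · have : IsEmpty {x : κ → ℝ // vnorm x = 1} := ⟨fun x => by simpa [vnorm] using x.2⟩
    rw [sigmaMin, Real.iInf_of_isEmpty]; positivity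
  classical
  calc sigmaMin M ≤ vnorm (M *ᵥ Pi.single j 1) :=
        sigmaMin_le_vnorm_mulVec M (by simp [vnorm_single])
    _ ≤ √(Fintype.card ι) * c := vnorm_le_sqrt_card_mul fun i => by simpa using h i j

lemma exists_vnorm_eq_one_vecMul_eq_zero (M : Matrix ι κ ℝ)
    (h : Fintype.card κ < Fintype.card ι) :
    ∃ v, vnorm v = 1 ∧ v ᵥ* M = 0 := by
  obtain ⟨w, hw, hw0⟩ := Submodule.exists_mem_ne_zero_of_ne_bot
    (LinearMap.ker_ne_bot_of_finrank_lt (f := M.vecMulLinear) (by simpa using h))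
  obtain ⟨c, hc⟩ := exists_vnorm_eq_one_smul hw0
  exact ⟨c • w, hc, by rw [Matrix.smul_vecMul, show w ᵥ* M = 0 from hw, smul_zero]⟩

end sigmaMin

section appendCol

variable {n d : ℕ} {M : Matrix (Fin n) (Fin d) ℝ} {g : Fin n → ℝ}

lemma appendCol_mulVec (M : Matrix (Fin n) (Fin d) ℝ) (g : Fin n → ℝ) (x : Fin (d + 1) → ℝ) :
    appendCol M g *ᵥ x = M *ᵥ Fin.init x + x (Fin.last d) • g := by
  ext i
  simp [appendCol, Matrix.mulVec, dotProduct, Fin.sum_univ_castSucc, Fin.init, mul_comm]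

lemma vnorm_init_sq_add_sq_last (x : Fin (d + 1) → ℝ) :
    vnorm (Fin.init x) ^ 2 + x (Fin.last d) ^ 2 = vnorm x ^ 2 := by
  simp only [vnorm, Real.sq_sqrt (Finset.sum_nonneg fun _ _ => sq_nonneg _)]
  rw [Fin.sum_univ_castSucc]
  rfl

lemma dotProduct_appendCol_mulVec {v : Fin n → ℝ} (hvM : v ᵥ* M = 0) (x : Fin (d + 1) → ℝ) :
    v ⬝ᵥ (appendCol M g *ᵥ x) = x (Fin.last d) * (v ⬝ᵥ g) := by
  rw [appendCol_mulVec, dotProduct_add, dotProduct_mulVec, hvM, zero_dotProduct, zero_add,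
    dotProduct_smul, smul_eq_mul]

theorem min_le_sigmaMin_appendCol {v : Fin n → ℝ} {α : ℝ} (hα0 : 0 ≤ α) (hα1 : α ≤ 1)
    (hαM : α ≤ sigmaMin M) (hg : vnorm g ≤ 1) (hv : vnorm v ≤ 1) (hvM : v ᵥ* M = 0) :
    min (α / 2 * |v ⬝ᵥ g|) (α / 4) ≤ sigmaMin (appendCol M g) := by
  refine le_sigmaMin fun x hx => ?_
  set t := x (Fin.last d)
  rcases le_or_gt (α / 2) |t| with ht | ht
  · refine min_le_of_left_le ?_
    calc α / 2 * |v ⬝ᵥ g| ≤ |t| * |v ⬝ᵥ g| := by gcongr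
      _ = |v ⬝ᵥ (appendCol M g *ᵥ x)| := by rw [dotProduct_appendCol_mulVec hvM, abs_mul]
      _ ≤ vnorm v * vnorm (appendCol M g *ᵥ x) := abs_dotProduct_le_vnorm_mul _ _
      _ ≤ vnorm (appendCol M g *ᵥ x) := mul_le_of_le_one_left (vnorm_nonneg _) hv
  · refine min_le_of_right_le ?_
    have hy : 3 / 4 ≤ vnorm (Fin.init x) := by
      have hsq := vnorm_init_sq_add_sq_last x
      rw [hx] at hsq
      nlinarith [vnorm_nonneg (Fin.init x), abs_nonneg t, sq_abs t]
    calc α / 4 ≤ α * vnorm (Fin.init x) - α / 2 * vnorm g := by nlinarith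
      _ ≤ sigmaMin M * vnorm (Fin.init x) - |t| * vnorm g := by
          gcongr
          exact vnorm_nonneg _
      _ ≤ vnorm (M *ᵥ Fin.init x) - vnorm (t • g) := by
          rw [vnorm_smul]; gcongr; exact sigmaMin_mul_vnorm_le M _
      _ ≤ vnorm (appendCol M g *ᵥ x) := by
          rw [appendCol_mulVec]; exact vnorm_sub_le_vnorm_add _ _

lemma abs_appendCol_le {c : ℝ} (hM : ∀ i j, |M i j| ≤ c) (hg : ∀ i, |g i| ≤ c) (i : Fin n)
    (j : Fin (d + 1)) : |appendCol M g i j| ≤ c := by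
  induction j using Fin.lastCases with
  | last => simpa [appendCol] using hg i
  | cast j => simpa [appendCol] using hM i j

theorem inv_pow_ten_mul_le_sigmaMin_appendCol (hn : 2 ≤ n) (hM : ∀ i j, |M i j| ≤ 1 / n)
    {α : ℝ} (hα : 0 < α) (hαM : α ≤ sigmaMin M) (hg : ∀ i, |g i| ≤ 1 / n) {v : Fin n → ℝ}
    (hv : vnorm v = 1) (hvM : v ᵥ* M = 0) (hvg : ((n : ℝ) ^ 6)⁻¹ ≤ |v ⬝ᵥ g|) :
    ((n : ℝ) ^ 10)⁻¹ * α ≤ sigmaMin (appendCol M g) := by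
  have hn2 : (2 : ℝ) ≤ n := by exact_mod_cast hn
  have hsqrt : √(Fintype.card (Fin n) : ℝ) * (1 / n) ≤ 1 := by
    simpa using sqrt_natCast_mul_inv_le_one (n := n) (by omega)
  have hα1 : α ≤ 1 :=
    hαM.trans ((sigmaMin_le_sqrt_card_mul (by positivity) hM).trans hsqrt)
  have hgn : vnorm g ≤ 1 := (vnorm_le_sqrt_card_mul hg).trans hsqrt
  refine le_trans ?_ (min_le_sigmaMin_appendCol hα.le hα1 hαM hgn hv.le hvM)
  have h6 : ((n : ℝ) ^ 6)⁻¹ ≤ 1 := inv_le_one_of_one_le₀ (one_le_pow₀ (by linarith))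
  have h4 : ((n : ℝ) ^ 4)⁻¹ ≤ 1 / 16 := by
    rw [inv_le_comm₀ (by positivity) (by norm_num)]
    nlinarith [pow_le_pow_left₀ (by norm_num) hn2 4]
  have h10 : ((n : ℝ) ^ 10)⁻¹ = ((n : ℝ) ^ 6)⁻¹ * ((n : ℝ) ^ 4)⁻¹ := by
    rw [← mul_inv, ← pow_add]
  have h6pos : 0 ≤ ((n : ℝ) ^ 6)⁻¹ := by positivity
  refine le_min ?_ ?_
  · calc ((n : ℝ) ^ 10)⁻¹ * α ≤ α / 2 * ((n : ℝ) ^ 6)⁻¹ := by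
          rw [h10]; nlinarith [mul_le_mul_of_nonneg_left h4 h6pos]
      _ ≤ α / 2 * |v ⬝ᵥ g| := by gcongr
  · rw [h10]; nlinarith [mul_le_mul h6 h4 (by positivity) zero_le_one]

lemma appendCol_inv_sq_smul_bounds (hn : 2 ≤ n) (hM : ∀ i j, |M i j| ≤ 1 / n) {α : ℝ}
    (hα : 0 < α) (hαM : α ≤ sigmaMin M) {v : Fin n → ℝ} (hv : vnorm v = 1) (hvM : v ᵥ* M = 0)
    {x : Fin n → ℝ} (hx : ∀ i, |x i| ≤ n) (hvx : ((n : ℝ) ^ 4)⁻¹ ≤ |v ⬝ᵥ x|) :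
    (∀ i j, |appendCol M (fun i => 1 / (n : ℝ) ^ 2 * x i) i j| ≤ 1 / n) ∧
      ((n : ℝ) ^ 10)⁻¹ * α ≤ sigmaMin (appendCol M fun i => 1 / (n : ℝ) ^ 2 * x i) := by
  have hn0 : (0 : ℝ) < n := by positivity
  have hg (i : Fin n) : |1 / (n : ℝ) ^ 2 * x i| ≤ 1 / (n : ℝ) := by
    rw [abs_mul, abs_of_pos (by positivity)]
    calc 1 / (n : ℝ) ^ 2 * |x i| ≤ 1 / (n : ℝ) ^ 2 * n := by gcongr; exact hx i
      _ = 1 / (n : ℝ) := by field_simp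
  have hvg : ((n : ℝ) ^ 6)⁻¹ ≤ |v ⬝ᵥ fun i => 1 / (n : ℝ) ^ 2 * x i| := by
    rw [show (fun i => 1 / (n : ℝ) ^ 2 * x i) = (1 / (n : ℝ) ^ 2) • x from rfl,
      dotProduct_smul, smul_eq_mul, abs_mul, abs_of_pos (by positivity)]
    calc ((n : ℝ) ^ 6)⁻¹ = 1 / (n : ℝ) ^ 2 * ((n : ℝ) ^ 4)⁻¹ := by field_simp
      _ ≤ 1 / (n : ℝ) ^ 2 * |v ⬝ᵥ x| := by gcongr
  exact ⟨abs_appendCol_le hM hg, inv_pow_ten_mul_le_sigmaMin_appendCol hn hM hα hαM hg hv hvM hvg⟩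

end appendCol

section gaussian

variable {Ω : Type*} [MeasurableSpace Ω] {μ : Measure Ω}

lemma map_sum_mul_eq_gaussianReal [IsProbabilityMeasure μ] {ι : Type*} {X : ι → Ω → ℝ}
    (hX : ∀ i, Measurable (X i)) (hind : iIndepFun X μ)
    (hlaw : ∀ i, μ.map (X i) = gaussianReal 0 1) (c : ι → ℝ) (s : Finset ι) :
    μ.map (fun ω => ∑ i ∈ s, c i * X i ω) = gaussianReal 0 (∑ i ∈ s, ‖c i‖₊ ^ 2) := by
  classical
  set Y : ι → Ω → ℝ := fun i ω => c i * X i ω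
  have hYmeas : ∀ i, Measurable (Y i) := fun i => (hX i).const_mul (c i)
  have hYind : iIndepFun Y μ := hind.comp _ fun i => measurable_const_mul (c i)
  have hYlaw : ∀ i, μ.map (Y i) = gaussianReal 0 (‖c i‖₊ ^ 2) := fun i => by
    rw [show Y i = (c i * ·) ∘ X i from rfl, ← Measure.map_map (measurable_const_mul _) (hX i),
      hlaw, gaussianReal_map_const_mul, mul_zero, mul_one]
    congr 1
    ext
    simp
  induction s using Finset.induction_on with
  | empty => simp [Measure.map_const, gaussianReal_zero_var]
  | insert a s ha ih =>
    have hsum : (fun ω => ∑ i ∈ insert a s, c i * X i ω) = (∑ i ∈ s, Y i) + Y a := by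
      ext ω
      simp [Finset.sum_insert ha, Y, add_comm]
    have ih' : μ.map (∑ i ∈ s, Y i) = gaussianReal 0 (∑ i ∈ s, ‖c i‖₊ ^ 2) := by
      rw [← ih]; congr; ext ω; simp [Y]
    rw [hsum, Finset.sum_insert ha, add_comm (‖c a‖₊ ^ 2), ← add_zero (0 : ℝ)]
    exact gaussianReal_add_gaussianReal_of_indepFun
      (hYind.indepFun_finsetSum_of_notMem hYmeas ha) ih' (hYlaw a)

lemma gaussianPDFReal_zero_one (x : ℝ) :
    gaussianPDFReal 0 1 x = (√(2 * π))⁻¹ * exp (-x ^ 2 / 2) := by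
  simp [gaussianPDFReal]

lemma gaussianReal_abs_lt_le (δ : ℝ) :
    gaussianReal 0 1 {x | |x| < δ} ≤ ENNReal.ofReal (2 * δ / √(2 * π)) := by
  have hset : {x : ℝ | |x| < δ} = Ioo (-δ) δ := by ext; simp [abs_lt]
  rcases le_or_gt δ 0 with hδ | hδ
  · simp [hset, Ioo_eq_empty_of_le (show δ ≤ -δ by linarith)]
  rw [hset, gaussianReal_apply_eq_integral 0 one_ne_zero]
  refine ENNReal.ofReal_le_ofReal ?_
  calc ∫ x in Ioo (-δ) δ, gaussianPDFReal 0 1 x ≤ ∫ _ in Ioo (-δ) δ, (√(2 * π))⁻¹ := by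
        refine setIntegral_mono (integrable_gaussianPDFReal 0 1).integrableOn
          (integrableOn_const measure_Ioo_lt_top.ne) fun x => ?_
        rw [gaussianPDFReal_zero_one]
        exact mul_le_of_le_one_right (by positivity)
          (exp_le_one_iff.mpr (by nlinarith [sq_nonneg x]))
    _ = 2 * δ / √(2 * π) := by
        rw [setIntegral_const, volume_real_Ioo_of_le (by linarith), smul_eq_mul]
        ring

lemma gaussianReal_Ioi_le {t : ℝ} (ht : 0 < t) :
    gaussianReal 0 1 (Ioi t) ≤ ENNReal.ofReal (exp (-t ^ 2 / 2) / (t * √(2 * π))) := by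
  rw [gaussianReal_apply_eq_integral 0 one_ne_zero]
  refine ENNReal.ofReal_le_ofReal ?_
  calc ∫ x in Ioi t, gaussianPDFReal 0 1 x
      ≤ ∫ x in Ioi t, (√(2 * π))⁻¹ * exp (t ^ 2 / 2) * exp (-t * x) := by
        refine setIntegral_mono (integrable_gaussianPDFReal 0 1).integrableOn
          ((integrableOn_exp_mul_Ioi (by linarith) t).const_mul _) fun x => ?_
        rw [gaussianPDFReal_zero_one, mul_assoc, ← exp_add]
        gcongr
        nlinarith [sq_nonneg (x - t)]
    _ = exp (-t ^ 2 / 2) / (t * √(2 * π)) := by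
        rw [integral_const_mul, integral_exp_mul_Ioi (by linarith), mul_assoc, neg_div_neg_eq,
          mul_div_assoc', ← exp_add]
        field_simp
        ring_nf

lemma gaussianReal_lt_abs_le {t : ℝ} (ht : 0 < t) :
    gaussianReal 0 1 {x | t < |x|} ≤
      ENNReal.ofReal (2 * (exp (-t ^ 2 / 2) / (t * √(2 * π)))) := by
  have hset : {x : ℝ | t < |x|} = Ioi t ∪ (fun x => -x) ⁻¹' Ioi t := by
    ext; simp [lt_abs, lt_neg]
  have hneg : gaussianReal 0 1 ((fun x => -x) ⁻¹' Ioi t) = gaussianReal 0 1 (Ioi t) := by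
    rw [← Measure.map_apply measurable_neg measurableSet_Ioi, gaussianReal_map_neg, neg_zero]
  rw [hset, two_mul, ENNReal.ofReal_add (by positivity) (by positivity)]
  calc _ ≤ gaussianReal 0 1 (Ioi t) + gaussianReal 0 1 ((fun x => -x) ⁻¹' Ioi t) :=
        measure_union_le _ _
    _ ≤ _ := by rw [hneg]; exact add_le_add (gaussianReal_Ioi_le ht) (gaussianReal_Ioi_le ht)

end gaussian

lemma le_exp_half {x : ℝ} (hx : 0 ≤ x) : x ≤ exp (x / 2) := by
  nlinarith [quadratic_le_exp_of_nonneg (div_nonneg hx zero_le_two), sq_nonneg (x - 2)]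

lemma two_div_sqrt_two_pi_le : 2 / √(2 * π) ≤ 4 / 5 := by
  rw [div_le_iff₀ (by positivity), ← div_le_iff₀' (by norm_num),
    Real.le_sqrt (by norm_num) (by positivity)]
  nlinarith [Real.pi_gt_d2]

lemma gaussian_tail_add_small_ball_le_inv_sq {x : ℝ} (hx : 2 ≤ x) :
    x * (2 * (exp (-x ^ 2 / 2) / (x * √(2 * π)))) + 2 * (x ^ 4)⁻¹ / √(2 * π) ≤ (x ^ 2)⁻¹ := by
  have hexp : exp (-x ^ 2 / 2) ≤ (x ^ 2)⁻¹ := by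
    rw [neg_div, exp_neg]
    exact inv_anti₀ (by positivity) (le_exp_half (by positivity))
  have h4 : (x ^ 4)⁻¹ ≤ (x ^ 2)⁻¹ / 4 := by
    rw [show x ^ 4 = x ^ 2 * x ^ 2 by ring, mul_inv, div_eq_mul_inv, mul_comm]
    gcongr
    nlinarith
  calc x * (2 * (exp (-x ^ 2 / 2) / (x * √(2 * π)))) + 2 * (x ^ 4)⁻¹ / √(2 * π)
      = 2 / √(2 * π) * (exp (-x ^ 2 / 2) + (x ^ 4)⁻¹) := by field_simp
    _ ≤ 4 / 5 * (exp (-x ^ 2 / 2) + (x ^ 4)⁻¹) :=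
        mul_le_mul_of_nonneg_right two_div_sqrt_two_pi_le (by positivity)
    _ ≤ 4 / 5 * ((x ^ 2)⁻¹ + (x ^ 2)⁻¹ / 4) := by gcongr
    _ = (x ^ 2)⁻¹ := by ring

section failureProbability

variable {Ω : Type*} [MeasurableSpace Ω] {μ : Measure Ω}

lemma ofReal_one_sub_le_measure [IsProbabilityMeasure μ] {s : Set Ω} {p : ℝ} (hp : 0 ≤ p)
    (hs : μ sᶜ ≤ ENNReal.ofReal p) : ENNReal.ofReal (1 - p) ≤ μ s := by
  rw [ENNReal.ofReal_sub _ hp, ENNReal.ofReal_one, tsub_le_iff_right]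
  calc 1 = μ univ := measure_univ.symm
    _ ≤ μ s + μ sᶜ := measure_univ_le_add_compl s
    _ ≤ μ s + ENNReal.ofReal p := by gcongr

lemma measure_lt_abs_le {X : Ω → ℝ} (hX : Measurable X) (hlaw : μ.map X = gaussianReal 0 1)
    {t : ℝ} (ht : 0 < t) :
    μ {ω | t < |X ω|} ≤ ENNReal.ofReal (2 * (exp (-t ^ 2 / 2) / (t * √(2 * π)))) := by
  rw [show {ω | t < |X ω|} = X ⁻¹' {x | t < |x|} from rfl,
    ← Measure.map_apply hX (measurableSet_lt measurable_const measurable_abs), hlaw]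
  exact gaussianReal_lt_abs_le ht

lemma measure_abs_dotProduct_lt_le [IsProbabilityMeasure μ] {ι : Type*} [Fintype ι]
    {z : Ω → ι → ℝ} (hzmeas : ∀ i, Measurable fun ω => z ω i)
    (hzindep : iIndepFun (fun i ω => z ω i) μ)
    (hzlaw : ∀ i, μ.map (fun ω => z ω i) = gaussianReal 0 1) {v : ι → ℝ} (hv : vnorm v = 1)
    (δ : ℝ) : μ {ω | |v ⬝ᵥ z ω| < δ} ≤ ENNReal.ofReal (2 * δ / √(2 * π)) := by
  have hvar : ∑ i, ‖v i‖₊ ^ 2 = 1 := by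
    rw [vnorm, Real.sqrt_eq_one] at hv
    exact NNReal.eq (by simpa using hv)
  have hlaw := map_sum_mul_eq_gaussianReal hzmeas hzindep hzlaw v Finset.univ
  rw [hvar] at hlaw
  rw [show {ω | |v ⬝ᵥ z ω| < δ} = (fun ω => ∑ i, v i * z ω i) ⁻¹' {x | |x| < δ} from rfl,
    ← Measure.map_apply (by fun_prop) (measurableSet_lt measurable_abs measurable_const), hlaw]
  exact gaussianReal_abs_lt_le δ

lemma measure_exists_lt_abs_or_abs_dotProduct_lt_le [IsProbabilityMeasure μ] {n : ℕ}
    (hn : 2 ≤ n) {z : Ω → Fin n → ℝ} (hzmeas : ∀ i, Measurable fun ω => z ω i)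
    (hzindep : iIndepFun (fun i ω => z ω i) μ)
    (hzlaw : ∀ i, μ.map (fun ω => z ω i) = gaussianReal 0 1) {v : Fin n → ℝ} (hv : vnorm v = 1) :
    μ ((⋃ i, {ω | (n : ℝ) < |z ω i|}) ∪ {ω | |v ⬝ᵥ z ω| < ((n : ℝ) ^ 4)⁻¹}) ≤
      ENNReal.ofReal ((n : ℝ) ^ 2)⁻¹ := by
  have hn2 : (2 : ℝ) ≤ n := by exact_mod_cast hn
  calc _ ≤ ∑ i, μ {ω | (n : ℝ) < |z ω i|} + μ {ω | |v ⬝ᵥ z ω| < ((n : ℝ) ^ 4)⁻¹} :=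
        (measure_union_le _ _).trans (add_le_add_left (measure_iUnion_fintype_le _ _) _)
    _ ≤ ∑ _i : Fin n, ENNReal.ofReal (2 * (exp (-(n : ℝ) ^ 2 / 2) / (n * √(2 * π)))) +
          ENNReal.ofReal (2 * ((n : ℝ) ^ 4)⁻¹ / √(2 * π)) := by
        gcongr with i
        · exact measure_lt_abs_le (hzmeas i) (hzlaw i) (by positivity)
        · exact measure_abs_dotProduct_lt_le hzmeas hzindep hzlaw hv _
    _ = ENNReal.ofReal (n * (2 * (exp (-(n : ℝ) ^ 2 / 2) / (n * √(2 * π)))) +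
          2 * ((n : ℝ) ^ 4)⁻¹ / √(2 * π)) := by
        rw [Finset.sum_const, Finset.card_univ, Fintype.card_fin, nsmul_eq_mul,
          ← ENNReal.ofReal_natCast, ← ENNReal.ofReal_mul (by positivity),
          ← ENNReal.ofReal_add (by positivity) (by positivity)]
    _ ≤ ENNReal.ofReal ((n : ℝ) ^ 2)⁻¹ :=
        ENNReal.ofReal_le_ofReal (gaussian_tail_add_small_ball_le_inv_sq hn2)

end failureProbability

/-- **Padding with a random Gaussian column keeps the matrix well-conditioned.**
If `M` is `n×d` with `d < n`, entries of magnitude at most `1/n` and minimum singular value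
at least `α > 0`, and `g = (1/n²)·z` with `z` a standard Gaussian vector, then with
probability at least `1 − n⁻²` every entry of `[M, g]` has magnitude at most `1/n` and the
minimum singular value of `[M, g]` is at least `n⁻¹⁰·α`. -/
theorem append_gaussian_column_min_singular_value
    {Ω : Type*} [MeasurableSpace Ω] (μ : Measure Ω) [IsProbabilityMeasure μ]
    (n d : ℕ) (hn : 2 ≤ n) (hd : d < n)
    (M : Matrix (Fin n) (Fin d) ℝ) (hMent : ∀ i j, |M i j| ≤ 1 / n)
    (α : ℝ) (hα : 0 < α) (hMsv : α ≤ sigmaMin M)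
    (z : Ω → Fin n → ℝ)
    (hzmeas : ∀ i, Measurable fun ω => z ω i)
    (hzindep : iIndepFun (fun (i : Fin n) (ω : Ω) => z ω i) μ)
    (hzlaw : ∀ i, Measure.map (fun ω => z ω i) μ = gaussianReal 0 1) :
    ENNReal.ofReal (1 - (n : ℝ) ^ (-2 : ℝ)) ≤
      μ {ω | (∀ i j, |appendCol M (fun i => (1 / (n : ℝ) ^ 2) * z ω i) i j| ≤ 1 / n) ∧
             (n : ℝ) ^ (-10 : ℝ) * α ≤
               sigmaMin (appendCol M (fun i => (1 / (n : ℝ) ^ 2) * z ω i))} := by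
  have hn0 : (0 : ℝ) < n := by positivity
  have hrpow (k : ℕ) : (n : ℝ) ^ (-k : ℝ) = ((n : ℝ) ^ k)⁻¹ := by
    rw [Real.rpow_neg hn0.le, Real.rpow_natCast]
  obtain ⟨v, hv, hvM⟩ := exists_vnorm_eq_one_vecMul_eq_zero M (by simpa using hd)
  rw [show (-2 : ℝ) = -(2 : ℕ) by norm_num, show (-10 : ℝ) = -(10 : ℕ) by norm_num, hrpow, hrpow]
  refine ofReal_one_sub_le_measure (by positivity) ((measure_mono ?_).trans
    (measure_exists_lt_abs_or_abs_dotProduct_lt_le hn hzmeas hzindep hzlaw hv))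
  rw [compl_subset_comm]
  intro ω hω
  simp only [mem_compl_iff, mem_union, mem_iUnion, mem_ofPred_eq, not_or, not_exists,
    not_lt] at hω
  exact appendCol_inv_sq_smul_bounds hn hMent hα hMsv hv hvM (x := z ω) hω.1 hω.2
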